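/- Let F : X → Y with derivative family F'(x) satisfy the tangential cone condition with constant η < 1/2 on a ball B. If x† ∈ B solves F(x†) = y and x ∈ B satisfies ‖F(x) − y^δ‖ > τ δ with ‖y^δ − y‖ ≤ δ and τ > 2(1+η)/(1−2η), then the Landweber step x₊ = x − F'(x)*(F(x) − y^δ) (with ‖F'(x)‖ ≤ 1) satisfies ‖x₊ − x†‖² ≤ ‖x − x†‖² − (1 − 2η − 2(1+η)δ/‖F(x) − y^δ‖) ‖F(x) − y^δ‖² / ‖F'(x)‖²·‖F'(x)‖² with the bracket positive; in particular ‖x₊ − x†‖ < ‖x − x†‖ (monotonicity of the Landweber iteration error). -/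
import Mathlib

open RealInnerProductSpace

set_option maxHeartbeats 1000000 in
theorem stmt_12
    {X Y : Type*}
    [NormedAddCommGroup X] [InnerProductSpace ℝ X] [CompleteSpace X]
    [NormedAddCommGroup Y] [InnerProductSpace ℝ Y] [CompleteSpace Y]
    (B : Set X) (F : X → Y) (F' : X → (X →L[ℝ] Y)) (η : ℝ)
    (hη0 : 0 ≤ η) (hη : η < 1 / 2)
    (hF'norm : ∀ x ∈ B, ‖F' x‖ ≤ 1)
    (htc : ∀ x ∈ B, ∀ xt ∈ B,
      ‖F xt - F x - F' x (xt - x)‖ ≤ η * ‖F xt - F x‖)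
    (xdag : X) (hxdag : xdag ∈ B) (y yδ : Y) (hy : F xdag = y)
    (δ τ : ℝ) (hδ : 0 ≤ δ) (hnoise : ‖yδ - y‖ ≤ δ)
    (hτ : τ > 2 * (1 + η) / (1 - 2 * η))
    (x : X) (hx : x ∈ B) (hdiscr : ‖F x - yδ‖ > τ * δ) :
    0 < 1 - 2 * η - 2 * (1 + η) * δ / ‖F x - yδ‖ ∧
    ‖(x - (ContinuousLinearMap.adjoint (F' x)) (F x - yδ)) - xdag‖ ^ 2 ≤
      ‖x - xdag‖ ^ 2 -
        (1 - 2 * η - 2 * (1 + η) * δ / ‖F x - yδ‖) * ‖F x - yδ‖ ^ 2 ∧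
    ‖(x - (ContinuousLinearMap.adjoint (F' x)) (F x - yδ)) - xdag‖ < ‖x - xdag‖ := by
  set A := F' x with hA
  set r : Y := F x - yδ with hrdef
  set s : X := (ContinuousLinearMap.adjoint A) r with hsdef
  have h12 : 0 < 1 - 2 * η := by linarith
  have hτpos : 0 < τ := lt_trans (div_pos (by linarith) h12) hτ
  have hrpos : 0 < ‖r‖ := lt_of_le_of_lt (mul_nonneg hτpos.le hδ) hdiscr
  -- bracket positivity
  have hfrac : 2 * (1 + η) * δ / ‖r‖ < 1 - 2 * η := by
    have h1 : 2 * (1 + η) * δ / ‖r‖ < 2 * (1 + η) / τ := by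
      rw [div_lt_div_iff₀ hrpos hτpos]
      nlinarith [hdiscr]
    have h2 : 2 * (1 + η) / τ < 1 - 2 * η := by
      rw [div_lt_iff₀ hτpos]
      have := (div_lt_iff₀ h12).mp hτ
      nlinarith
    linarith
  have hbr : 0 < 1 - 2 * η - 2 * (1 + η) * δ / ‖r‖ := by linarith
  have key : ‖(x - s) - xdag‖ ^ 2 ≤
      ‖x - xdag‖ ^ 2 - (1 - 2 * η - 2 * (1 + η) * δ / ‖r‖) * ‖r‖ ^ 2 := by
    have hAe : A (x - xdag) = (F x - y) + (F xdag - F x - A (xdag - x)) := by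
      rw [hy]; rw [map_sub, map_sub]; abel
    have hw : ‖F xdag - F x - A (xdag - x)‖ ≤ η * (‖r‖ + δ) := by
      have h1 := htc x hx xdag hxdag
      have h2 : ‖F xdag - F x‖ ≤ ‖r‖ + δ := by
        rw [hy, norm_sub_rev]
        calc ‖F x - y‖ = ‖(F x - yδ) + (yδ - y)‖ := by rw [sub_add_sub_cancel]
          _ ≤ ‖F x - yδ‖ + ‖yδ - y‖ := norm_add_le _ _
          _ ≤ ‖r‖ + δ := by rw [← hrdef]; linarith
      calc ‖F xdag - F x - A (xdag - x)‖ ≤ η * ‖F xdag - F x‖ := h1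
        _ ≤ η * (‖r‖ + δ) := by nlinarith
    have hinner : (1 - η) * ‖r‖ ^ 2 - (1 + η) * δ * ‖r‖ ≤ ⟪s, x - xdag⟫ := by
      have hsl : ⟪s, x - xdag⟫ = ⟪r, A (x - xdag)⟫ :=
        ContinuousLinearMap.adjoint_inner_left A (x - xdag) r
      rw [hsl, hAe]
      have hFxy : F x - y = r + (yδ - y) := by rw [hrdef]; abel
      rw [hFxy, inner_add_right, inner_add_right, real_inner_self_eq_norm_sq]
      have h3 : |⟪r, yδ - y⟫| ≤ ‖r‖ * δ := by
        calc |⟪r, yδ - y⟫| ≤ ‖r‖ * ‖yδ - y‖ := abs_real_inner_le_norm _ _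
          _ ≤ ‖r‖ * δ := by nlinarith
      have h4 : |⟪r, F xdag - F x - A (xdag - x)⟫| ≤ ‖r‖ * (η * (‖r‖ + δ)) := by
        calc |⟪r, F xdag - F x - A (xdag - x)⟫|
            ≤ ‖r‖ * ‖F xdag - F x - A (xdag - x)‖ := abs_real_inner_le_norm _ _
          _ ≤ ‖r‖ * (η * (‖r‖ + δ)) := by nlinarith
      have h3' := neg_abs_le ⟪r, yδ - y⟫
      have h4' := neg_abs_le ⟪r, F xdag - F x - A (xdag - x)⟫
      nlinarith
    have hsnorm : ‖s‖ ≤ ‖r‖ := by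
      have h1 : ‖s‖ ≤ ‖ContinuousLinearMap.adjoint A‖ * ‖r‖ :=
        (ContinuousLinearMap.adjoint A).le_opNorm r
      have h2 : ‖ContinuousLinearMap.adjoint A‖ = ‖A‖ :=
        LinearIsometryEquiv.norm_map ContinuousLinearMap.adjoint A
      have h3 : ‖A‖ ≤ 1 := hF'norm x hx
      calc ‖s‖ ≤ ‖ContinuousLinearMap.adjoint A‖ * ‖r‖ := h1
        _ = ‖A‖ * ‖r‖ := by rw [h2]
        _ ≤ 1 * ‖r‖ := by nlinarith
        _ = ‖r‖ := one_mul _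
    have hrw : (x - s) - xdag = (x - xdag) - s := by abel
    rw [hrw, norm_sub_sq_real, real_inner_comm]
    have hs2 : ‖s‖ ^ 2 ≤ ‖r‖ ^ 2 := by nlinarith [norm_nonneg s]
    have hdiv : 2 * (1 + η) * δ / ‖r‖ * ‖r‖ ^ 2 = 2 * (1 + η) * δ * ‖r‖ := by
      field_simp
    nlinarith [hinner, hs2]
  refine ⟨hbr, key, ?_⟩
  have hlt : ‖(x - s) - xdag‖ ^ 2 < ‖x - xdag‖ ^ 2 := by
    nlinarith [key, mul_pos hbr (by positivity : (0:ℝ) < ‖r‖ ^ 2)]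
  exact lt_of_pow_lt_pow_left₀ 2 (norm_nonneg _) hlt
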